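/- arXiv:2407.01019 — 2 statements merged into one kernel-verified Lean document; each statement's English description precedes it below -/
import Mathlib

section
/- For every y ∈ ℝ^m \ Z, the set T(y) is a nonempty convex subset of (0,∞) which is closed in (0,∞). Moreover, the set-valued map y ↦ T(y) is lower hemicontinuous on ℝ^m \ Z: for every y ∈ ℝ^m \ Z and every open set U ⊆ ℝ with T(y) ∩ U ≠ ∅, there exists a neighborhood 𝒲 of y such that T(z) ∩ U ≠ ∅ for every z ∈ 𝒲 ∩ (ℝ^m \ Z). -/
/-- The Lyapunov derivative `V̇(y) = ⟪∇V(y), F(y)⟫`. -/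
noncomputable def lyapDeriv {m : ℕ}
    (F : EuclideanSpace ℝ (Fin m) → EuclideanSpace ℝ (Fin m))
    (V : EuclideanSpace ℝ (Fin m) → ℝ) (y : EuclideanSpace ℝ (Fin m)) : ℝ :=
  inner ℝ (gradient V y) (F y)

/-- `g(y,x) = |F(y)ᵀ ∇²V(y + x F(y)) F(y)|`, with the Hessian realized as the derivative of
the gradient. -/
noncomputable def hessQuad {m : ℕ}
    (F : EuclideanSpace ℝ (Fin m) → EuclideanSpace ℝ (Fin m))
    (V : EuclideanSpace ℝ (Fin m) → ℝ) (y : EuclideanSpace ℝ (Fin m)) (x : ℝ) : ℝ :=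
  |(inner ℝ (F y) ((fderiv ℝ (gradient V) (y + x • F y)) (F y)) : ℝ)|

/-- `q(y,η) = η (max_{x ∈ [0,η]} g(y,x) + 1) + 2(1−λ) V̇(y)`. -/
noncomputable def qMaj {m : ℕ}
    (F : EuclideanSpace ℝ (Fin m) → EuclideanSpace ℝ (Fin m))
    (V : EuclideanSpace ℝ (Fin m) → ℝ) (lam : ℝ)
    (y : EuclideanSpace ℝ (Fin m)) (η : ℝ) : ℝ :=
  η * (sSup (hessQuad F V y '' Set.Icc 0 η) + 1) + 2 * (1 - lam) * lyapDeriv F V y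

/-- `T(y) = {η > 0 | q(y,η) ≤ 0}`. -/
noncomputable def Tmap {m : ℕ}
    (F : EuclideanSpace ℝ (Fin m) → EuclideanSpace ℝ (Fin m))
    (V : EuclideanSpace ℝ (Fin m) → ℝ) (lam : ℝ)
    (y : EuclideanSpace ℝ (Fin m)) : Set ℝ :=
  {η : ℝ | 0 < η ∧ qMaj F V lam y η ≤ 0}

/-!
`q(y, ·)` is strictly increasing on `[0, ∞)`: it is `η ↦ η (M(η) + 1)`, with `M` a nonnegative
running maximum, plus the constant `q(y, 0) = 2(1 - λ)V̇(y)`, which is negative off `Z`. Rescaling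
the running maximum to a maximum over the fixed interval `[0, 1]` shows that `q` is jointly
continuous on `ℝ^m × [0, ∞)`. Hence `T(y)` is a sublevel set of a continuous increasing function,
i.e. a nonempty interval closed in `(0, ∞)`. For lower hemicontinuity, a point `η₀ ∈ T(y) ∩ U` can
be moved slightly to the left inside `U`, where `q(y, η) < 0` holds strictly, an open condition
in `y`.
-/
open Set Filter Topology

theorem continuousOn_sSup_image_Icc {X : Type*} [TopologicalSpace X] {g : X → ℝ → ℝ}
    (hg : Continuous ↿g) :
    ContinuousOn (fun p : X × ℝ => sSup (g p.1 '' Icc 0 p.2)) {p | 0 ≤ p.2} := by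
  have hscale : ∀ p : X × ℝ, 0 ≤ p.2 →
      g p.1 '' Icc 0 p.2 = (fun t => g p.1 (t * p.2)) '' Icc 0 1 := by
    intro p hp
    rw [← image_image (g p.1) (· * p.2), image_mul_right_Icc zero_le_one hp, zero_mul, one_mul]
  have hcont : Continuous ↿(fun (p : X × ℝ) (t : ℝ) => g p.1 (t * p.2)) :=
    hg.comp (continuous_fst.fst.prodMk (continuous_snd.mul continuous_fst.snd))
  exact (isCompact_Icc.continuous_sSup hcont).continuousOn.congr fun p hp => by rw [hscale p hp]

theorem monotoneOn_sSup_image_Icc {g : ℝ → ℝ} (hg : Continuous g) :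
    MonotoneOn (fun η => sSup (g '' Icc 0 η)) (Ici 0) :=
  fun _ ha _ _ hab => csSup_le_csSup (isCompact_Icc.image hg).bddAbove
    ((nonempty_Icc.2 ha).image g) (image_mono (Icc_subset_Icc_right hab))

theorem strictMonoOn_mul_add_one_add_const {M : ℝ → ℝ} (hM : MonotoneOn M (Ici 0))
    (hM0 : ∀ η, 0 ≤ M η) (c : ℝ) : StrictMonoOn (fun η => η * (M η + 1) + c) (Ici 0) := by
  intro a ha b hb hab
  have hMb : 0 < M b + 1 := by linarith [hM0 b]
  have hMab : M a ≤ M b := hM ha hb hab.le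
  dsimp only
  gcongr ?_ + c
  calc a * (M a + 1) ≤ a * (M b + 1) := by gcongr
    _ < b * (M b + 1) := by gcongr

theorem ContDiff.gradient {E : Type*} [NormedAddCommGroup E] [InnerProductSpace ℝ E]
    [CompleteSpace E] {f : E → ℝ} {n : WithTop ℕ∞} (hf : ContDiff ℝ (n + 1) f) :
    ContDiff ℝ n (gradient f) :=
  (InnerProductSpace.toDual ℝ E).symm.contDiff.comp (hf.fderiv_right le_rfl)

section Tmap

variable {m : ℕ} {F : EuclideanSpace ℝ (Fin m) → EuclideanSpace ℝ (Fin m)}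
  {V : EuclideanSpace ℝ (Fin m) → ℝ} {lam : ℝ} {y : EuclideanSpace ℝ (Fin m)}

theorem continuous_lyapDeriv (hF : Continuous F) (hV : ContDiff ℝ 1 V) :
    Continuous (lyapDeriv F V) :=
  (ContDiff.gradient (n := 0) hV).continuous.inner hF

theorem continuous_hessQuad (hF : Continuous F) (hV : ContDiff ℝ 2 V) :
    Continuous ↿(hessQuad F V) := by
  have hHess : Continuous (fderiv ℝ (gradient V)) :=
    (ContDiff.gradient (n := 1) hV).continuous_fderiv one_ne_zero
  have hF₁ : Continuous fun p : EuclideanSpace ℝ (Fin m) × ℝ => F p.1 :=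
    hF.comp continuous_fst
  have hShift : Continuous fun p : EuclideanSpace ℝ (Fin m) × ℝ => p.1 + p.2 • F p.1 :=
    continuous_fst.add (continuous_snd.smul hF₁)
  exact (hF₁.inner ((hHess.comp hShift).clm_apply hF₁)).abs

variable (hF : Continuous F) (hV : ContDiff ℝ 2 V)
include hF hV

theorem continuousOn_qMaj :
    ContinuousOn (fun p : EuclideanSpace ℝ (Fin m) × ℝ => qMaj F V lam p.1 p.2)
      {p | 0 ≤ p.2} :=
  (continuousOn_snd.mul ((continuousOn_sSup_image_Icc (continuous_hessQuad hF hV)).add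
    continuousOn_const)).add
    (continuous_const.mul ((continuous_lyapDeriv hF (hV.of_le one_le_two)).comp
      continuous_fst)).continuousOn

theorem continuousAt_qMaj {η : ℝ} (hη : 0 < η) :
    ContinuousAt (fun p : EuclideanSpace ℝ (Fin m) × ℝ => qMaj F V lam p.1 p.2) (y, η) :=
  (continuousOn_qMaj hF hV).continuousAt
    (continuous_snd.continuousAt.preimage_mem_nhds (Ici_mem_nhds hη))

theorem strictMonoOn_qMaj : StrictMonoOn (qMaj F V lam y) (Ici 0) :=
  strictMonoOn_mul_add_one_add_const
    (monotoneOn_sSup_image_Icc ((continuous_hessQuad hF hV).uncurry_left y))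
    (fun _ => Real.sSup_nonneg (by rintro _ ⟨x, -, rfl⟩; exact abs_nonneg _)) _

theorem Tmap_nonempty (hlam : lam < 1) (hy : lyapDeriv F V y < 0) :
    (Tmap F V lam y).Nonempty := by
  have hq0 : qMaj F V lam y 0 < 0 := by
    have : 0 < 1 - lam := sub_pos.2 hlam
    simp only [qMaj, zero_mul, zero_add]
    nlinarith
  have hcont : ContinuousWithinAt (qMaj F V lam y) (Ioi 0) 0 :=
    (continuousOn_qMaj hF hV (y, 0) (le_refl (0 : ℝ))).comp
      (Continuous.prodMk_right y).continuousWithinAt fun η (hη : 0 < η) => show 0 ≤ η from hη.le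
  obtain ⟨η, hq, hη⟩ := ((hcont.eventually (Iio_mem_nhds hq0)).and self_mem_nhdsWithin).exists
  exact ⟨η, hη, le_of_lt hq⟩

theorem Tmap_ordConnected : (Tmap F V lam y).OrdConnected :=
  ⟨fun _ ha _ hb _ ht => ⟨ha.1.trans_le ht.1,
    ((strictMonoOn_qMaj hF hV).monotoneOn (ha.1.trans_le ht.1).le hb.1.le ht.2).trans hb.2⟩⟩

theorem Tmap_eq_closure_inter_Ioi :
    Tmap F V lam y = closure (Tmap F V lam y) ∩ Ioi 0 := by
  refine subset_antisymm (fun t ht => ⟨subset_closure ht, ht.1⟩) ?_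
  rintro t ⟨htT, ht⟩
  have hcont : ContinuousAt (qMaj F V lam y) t :=
    (continuousAt_qMaj hF hV ht).comp (Continuous.prodMk_right y).continuousAt
  exact ⟨ht, hcont.continuousWithinAt.closure_le htT continuousWithinAt_const fun _ hs => hs.2⟩

theorem Tmap_lowerHemicontinuous {U : Set ℝ} (hU : IsOpen U)
    (hTU : (Tmap F V lam y ∩ U).Nonempty) :
    ∃ W ∈ 𝓝 y, ∀ z ∈ W, (Tmap F V lam z ∩ U).Nonempty := by
  obtain ⟨η₀, ⟨hη₀, hq₀⟩, hη₀U⟩ := hTU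
  obtain ⟨η, hηU, hη⟩ :=
    Filter.nonempty_of_mem
      (inter_mem (nhdsWithin_le_nhds (hU.mem_nhds hη₀U)) (Ioo_mem_nhdsLT hη₀))
  have hq : qMaj F V lam y η < 0 :=
    ((strictMonoOn_qMaj hF hV) hη.1.le hη₀.le hη.2).trans_le hq₀
  have hcont : ContinuousAt (fun z => qMaj F V lam z η) y :=
    (continuousAt_qMaj hF hV hη.1).comp (f := fun z => (z, η))
      (Continuous.prodMk_left η).continuousAt
  exact ⟨_, hcont.preimage_mem_nhds (Iio_mem_nhds hq),
    fun z hz => ⟨η, ⟨hη.1, le_of_lt hz⟩, hηU⟩⟩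

end Tmap

theorem Tmap_nonempty_convex_closed_lowerHemicontinuous_general
    {m : ℕ} (lam : ℝ) (hlam : lam ∈ Set.Ioo (0 : ℝ) 1)
    (F : EuclideanSpace ℝ (Fin m) → EuclideanSpace ℝ (Fin m))
    (V : EuclideanSpace ℝ (Fin m) → ℝ)
    (hF : Continuous F) (hV : ContDiff ℝ 2 V)
    (hVdot : ∀ y, lyapDeriv F V y ≤ 0) :
    (∀ y, lyapDeriv F V y ≠ 0 →
      (Tmap F V lam y).Nonempty ∧
      Convex ℝ (Tmap F V lam y) ∧
      Tmap F V lam y ⊆ Set.Ioi 0 ∧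
      Tmap F V lam y = closure (Tmap F V lam y) ∩ Set.Ioi 0) ∧
    (∀ y, lyapDeriv F V y ≠ 0 →
      ∀ U : Set ℝ, IsOpen U → (Tmap F V lam y ∩ U).Nonempty →
        ∃ W ∈ nhds y, ∀ z ∈ W, lyapDeriv F V z ≠ 0 → (Tmap F V lam z ∩ U).Nonempty) := by
  refine ⟨fun y hy => ⟨?_, (Tmap_ordConnected hF hV).convex, fun _ hη => hη.1,
    Tmap_eq_closure_inter_Ioi hF hV⟩, fun y _ U hU hTU => ?_⟩
  · exact Tmap_nonempty hF hV hlam.2 ((hVdot y).lt_of_ne hy)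
  · obtain ⟨W, hW, hWU⟩ := Tmap_lowerHemicontinuous hF hV hU hTU
    exact ⟨W, hW, fun z hz _ => hWU z hz⟩

/-- **Lemma (properties of the set-valued map `T`).** For `y ∉ Z`, `T(y)` is a nonempty convex
subset of `(0,∞)` which is closed in `(0,∞)`; moreover `T` is lower hemicontinuous on
`ℝ^m \ Z`. -/
theorem Tmap_nonempty_convex_closed_lowerHemicontinuous
    {m : ℕ} (lam : ℝ) (hlam : lam ∈ Set.Ioo (0 : ℝ) 1)
    (F : EuclideanSpace ℝ (Fin m) → EuclideanSpace ℝ (Fin m))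
    (V : EuclideanSpace ℝ (Fin m) → ℝ)
    (hF : Continuous F) (hV : ContDiff ℝ 2 V) (hV0 : ∀ y, 0 ≤ V y)
    (hVdot : ∀ y, lyapDeriv F V y ≤ 0) :
    (∀ y, lyapDeriv F V y ≠ 0 →
      (Tmap F V lam y).Nonempty ∧
      Convex ℝ (Tmap F V lam y) ∧
      Tmap F V lam y ⊆ Set.Ioi 0 ∧
      Tmap F V lam y = closure (Tmap F V lam y) ∩ Set.Ioi 0) ∧
    (∀ y, lyapDeriv F V y ≠ 0 →
      ∀ U : Set ℝ, IsOpen U → (Tmap F V lam y ∩ U).Nonempty →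
        ∃ W ∈ nhds y, ∀ z ∈ W, lyapDeriv F V z ≠ 0 → (Tmap F V lam z ∩ U).Nonempty) :=
  Tmap_nonempty_convex_closed_lowerHemicontinuous_general lam hlam F V hF hV hVdot
end

section
/- Assume V is radially unbounded (V(y) → +∞ as ‖y‖ → ∞) and let G_V = {y* ∈ ℝ^m : V(y*) ≤ V(y) for all y ∈ ℝ^m} be its (nonempty) set of global minima. Then G_V is stable for both the LCR and the LCM algorithms: for every ε > 0 there exists r > 0 such that for any sequence (y_n) generated by LCR or LCM, if dist(y_0, G_V) < r then dist(y_n, G_V) < ε for all n ≥ 0. -/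
/-!
Both line-search rules take positive steps satisfying the Armijo condition, and `V̇ ≤ 0`, so
`V` is nonincreasing along every LCR or LCM sequence. Radial unboundedness makes the minimizer
set `G` of `V` compact and forces sublevel sets slightly above the minimum value into any
`ε`-neighbourhood of `G`; by compactness some uniform neighbourhood of `G` lies in such a sublevel
set, and the descent property keeps the iterates there.
-/

open Filter

/-- `f(y,η) = V(y + η F(y)) − V(y) − λ η V̇(y)`. -/
noncomputable def armijoGap {m : ℕ}
    (F : EuclideanSpace ℝ (Fin m) → EuclideanSpace ℝ (Fin m))
    (V : EuclideanSpace ℝ (Fin m) → ℝ) (lam : ℝ)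
    (y : EuclideanSpace ℝ (Fin m)) (η : ℝ) : ℝ :=
  V (y + η • F y) - V y - lam * η * lyapDeriv F V y

/-- The LCR algorithm. -/
def IsLCR {m : ℕ}
    (F : EuclideanSpace ℝ (Fin m) → EuclideanSpace ℝ (Fin m))
    (V : EuclideanSpace ℝ (Fin m) → ℝ) (lam ηinit f1 : ℝ)
    (y : ℕ → EuclideanSpace ℝ (Fin m)) (η : ℕ → ℝ) : Prop :=
  ∀ n, y (n + 1) = y n + η n • F (y n) ∧
    ∃ p : ℕ, η n = ηinit / f1 ^ p ∧
      armijoGap F V lam (y n) (η n) ≤ 0 ∧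
      ∀ k < p, ¬ armijoGap F V lam (y n) (ηinit / f1 ^ k) ≤ 0

/-- The LCM algorithm (convention `η_{-1} = η_init / f2`). -/
def IsLCM {m : ℕ}
    (F : EuclideanSpace ℝ (Fin m) → EuclideanSpace ℝ (Fin m))
    (V : EuclideanSpace ℝ (Fin m) → ℝ) (lam ηinit f1 f2 : ℝ)
    (y : ℕ → EuclideanSpace ℝ (Fin m)) (η : ℕ → ℝ) : Prop :=
  ∀ n, y (n + 1) = y n + η n • F (y n) ∧
    ∃ p : ℕ, η n = (if n = 0 then ηinit else f2 * η (n - 1)) / f1 ^ p ∧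
      armijoGap F V lam (y n) (η n) ≤ 0 ∧
      ∀ k < p, ¬ armijoGap F V lam (y n) ((if n = 0 then ηinit else f2 * η (n - 1)) / f1 ^ k) ≤ 0

open Metric Set

section Coercive

variable {X : Type*} {V : X → ℝ}

def minimizers (V : X → ℝ) : Set X := {x | ∀ y, V x ≤ V y}

lemma isClosed_minimizers [TopologicalSpace X] (hV : Continuous V) : IsClosed (minimizers V) := by
  simp only [minimizers, ofPred_forall]
  exact isClosed_iInter fun y => isClosed_le hV continuous_const

lemma isCompact_minimizers [TopologicalSpace X] (hV : Continuous V) (hcoer : Tendsto V (cocompact X) atTop) :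
    IsCompact (minimizers V) := by
  rcases (minimizers V).eq_empty_or_nonempty with hG | ⟨g, hg⟩
  · exact hG ▸ isCompact_empty
  obtain ⟨t, ht, hsub⟩ := mem_cocompact.1 (hcoer.eventually_gt_atTop (V g))
  refine ht.of_isClosed_subset (isClosed_minimizers hV) fun x hx => ?_
  by_contra hxt
  exact (hsub hxt).not_ge (hx g)

lemma exists_gt_forall_lt_infDist_minimizers_lt [PseudoMetricSpace X] (hV : Continuous V)
    (hcoer : Tendsto V (cocompact X) atTop) {g : X} (hg : g ∈ minimizers V) {ε : ℝ}
    (hε : 0 < ε) : ∃ c > V g, ∀ x, V x < c → infDist x (minimizers V) < ε := by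
  set K := {x | ε ≤ infDist x (minimizers V)}
  rcases K.eq_empty_or_nonempty with hK | ⟨x₀, hx₀⟩
  · refine ⟨V g + 1, by linarith, fun x _ => ?_⟩
    have hxK : x ∉ K := hK ▸ notMem_empty x
    simpa [K] using hxK
  have hKclosed : IsClosed K := isClosed_le continuous_const (continuous_infDist_pt _)
  obtain ⟨w, hwK, hwmin⟩ := hV.continuousOn.exists_isMinOn' hKclosed hx₀
    ((hcoer.eventually_ge_atTop (V x₀)).filter_mono inf_le_left)
  have hw : w ∉ minimizers V := fun hw => by
    have : ε ≤ 0 := infDist_zero_of_mem hw ▸ hwK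
    linarith
  obtain ⟨y, hy⟩ : ∃ y, V y < V w := by simpa [minimizers] using hw
  refine ⟨V w, (hg y).trans_lt hy, fun x hx => ?_⟩
  by_contra hxK
  exact hx.not_ge (hwmin (not_lt.1 hxK))

theorem exists_pos_infDist_minimizers_lt_of_le [PseudoMetricSpace X] (hV : Continuous V)
    (hcoer : Tendsto V (cocompact X) atTop) (hG : (minimizers V).Nonempty) {ε : ℝ}
    (hε : 0 < ε) :
    ∃ r > 0, ∀ x y, infDist x (minimizers V) < r → V y ≤ V x →
      infDist y (minimizers V) < ε := by
  obtain ⟨g, hg⟩ := hG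
  obtain ⟨c, hgc, hc⟩ := exists_gt_forall_lt_infDist_minimizers_lt hV hcoer hg hε
  have hsub : minimizers V ⊆ {x | V x < c} := fun x hx => (hx g).trans_lt hgc
  obtain ⟨r, hr, hthick⟩ := (isCompact_minimizers hV hcoer).exists_thickening_subset_open
    (isOpen_lt hV continuous_const) hsub
  refine ⟨r, hr, fun x y hx hyx => hc y (hyx.trans_lt (hthick ?_))⟩
  exact (mem_thickening_iff_infDist_lt ⟨g, hg⟩).2 hx

end Coercive

lemma tendsto_cocompact_atTop_of_forall_le_of_norm_ge {E : Type*} [NormedAddCommGroup E]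
    [ProperSpace E] {V : E → ℝ} (h : ∀ C : ℝ, ∃ R : ℝ, ∀ y : E, R ≤ ‖y‖ → C ≤ V y) :
    Tendsto V (cocompact E) atTop :=
  tendsto_atTop.2 fun C =>
    let ⟨R, hR⟩ := h C
    (tendsto_norm_cocompact_atTop.eventually_ge_atTop R).mono hR

section LineSearch

variable {m : ℕ} {F : EuclideanSpace ℝ (Fin m) → EuclideanSpace ℝ (Fin m)}
  {V : EuclideanSpace ℝ (Fin m) → ℝ} {lam ηinit f1 f2 : ℝ}
  {y : ℕ → EuclideanSpace ℝ (Fin m)} {η : ℕ → ℝ}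

lemma le_of_armijoGap_nonpos {x : EuclideanSpace ℝ (Fin m)} {t : ℝ} (hlam : 0 ≤ lam)
    (ht : 0 ≤ t) (hVdot : lyapDeriv F V x ≤ 0) (h : armijoGap F V lam x t ≤ 0) :
    V (x + t • F x) ≤ V x := by
  have : lam * t * lyapDeriv F V x ≤ 0 :=
    mul_nonpos_of_nonneg_of_nonpos (mul_nonneg hlam ht) hVdot
  unfold armijoGap at h
  linarith

lemma antitone_of_armijoGap_nonpos (hlam : 0 ≤ lam) (hVdot : ∀ x, lyapDeriv F V x ≤ 0)
    (hη : ∀ n, 0 ≤ η n) (hstep : ∀ n, y (n + 1) = y n + η n • F (y n))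
    (harmijo : ∀ n, armijoGap F V lam (y n) (η n) ≤ 0) : Antitone (V ∘ y) :=
  antitone_nat_of_succ_le fun n => by
    simpa only [Function.comp, hstep n] using
      le_of_armijoGap_nonpos hlam (hη n) (hVdot _) (harmijo n)

lemma IsLCR.pos (h : IsLCR F V lam ηinit f1 y η) (hηinit : 0 < ηinit) (hf1 : 0 < f1) (n : ℕ) :
    0 < η n := by
  obtain ⟨-, p, hp, -⟩ := h n
  exact hp ▸ div_pos hηinit (pow_pos hf1 p)

lemma IsLCM.pos (h : IsLCM F V lam ηinit f1 f2 y η) (hηinit : 0 < ηinit) (hf1 : 0 < f1)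
    (hf2 : 0 < f2) (n : ℕ) : 0 < η n := by
  induction n with
  | zero =>
    obtain ⟨-, p, hp, -⟩ := h 0
    exact hp ▸ div_pos hηinit (pow_pos hf1 p)
  | succ n ih =>
    obtain ⟨-, p, hp, -⟩ := h (n + 1)
    rw [hp, if_neg n.succ_ne_zero, Nat.add_sub_cancel]
    exact div_pos (mul_pos hf2 ih) (pow_pos hf1 p)

lemma IsLCR.antitone (h : IsLCR F V lam ηinit f1 y η) (hlam : 0 ≤ lam) (hηinit : 0 < ηinit)
    (hf1 : 0 < f1) (hVdot : ∀ x, lyapDeriv F V x ≤ 0) : Antitone (V ∘ y) :=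
  antitone_of_armijoGap_nonpos hlam hVdot (fun n => (h.pos hηinit hf1 n).le)
    (fun n => (h n).1) fun n => (h n).2.elim fun _ hp => hp.2.1

lemma IsLCM.antitone (h : IsLCM F V lam ηinit f1 f2 y η) (hlam : 0 ≤ lam)
    (hηinit : 0 < ηinit) (hf1 : 0 < f1) (hf2 : 0 < f2) (hVdot : ∀ x, lyapDeriv F V x ≤ 0) :
    Antitone (V ∘ y) :=
  antitone_of_armijoGap_nonpos hlam hVdot (fun n => (h.pos hηinit hf1 hf2 n).le)
    (fun n => (h n).1) fun n => (h n).2.elim fun _ hp => hp.2.1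

end LineSearch

theorem global_minima_stable_general
    {m : ℕ} (lam ηinit f1 f2 : ℝ)
    (hlam : lam ∈ Set.Ioo (0 : ℝ) 1) (hηinit : 0 < ηinit) (hf1 : 1 < f1) (hf2 : 1 < f2)
    (F : EuclideanSpace ℝ (Fin m) → EuclideanSpace ℝ (Fin m))
    (V : EuclideanSpace ℝ (Fin m) → ℝ)
    (hV : ContDiff ℝ 2 V)
    (hVdot : ∀ y, lyapDeriv F V y ≤ 0)
    (hrad : ∀ C : ℝ, ∃ Rr : ℝ, ∀ y : EuclideanSpace ℝ (Fin m), Rr ≤ ‖y‖ → C ≤ V y)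
    (G : Set (EuclideanSpace ℝ (Fin m)))
    (hG : G = {ystar | ∀ y, V ystar ≤ V y}) (hGne : G.Nonempty) :
    ∀ ε > 0, ∃ r > 0, ∀ (y : ℕ → EuclideanSpace ℝ (Fin m)) (η : ℕ → ℝ),
      (IsLCR F V lam ηinit f1 y η ∨ IsLCM F V lam ηinit f1 f2 y η) →
      Metric.infDist (y 0) G < r →
      ∀ n : ℕ, Metric.infDist (y n) G < ε := by
  change G = minimizers V at hG
  subst hG
  intro ε hε
  obtain ⟨r, hr, hstable⟩ := exists_pos_infDist_minimizers_lt_of_le hV.continuous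
    (tendsto_cocompact_atTop_of_forall_le_of_norm_ge hrad) hGne hε
  refine ⟨r, hr, fun y η halg hy0 n => hstable (y 0) (y n) hy0 ?_⟩
  have hdescent : Antitone (V ∘ y) := halg.elim
    (·.antitone hlam.1.le hηinit (by linarith) hVdot)
    (·.antitone hlam.1.le hηinit (by linarith) (by linarith) hVdot)
  exact hdescent n.zero_le

/-- **Stability of the set of global minima.** If `V` is radially unbounded, then its
(nonempty) set of global minima `G_V` is stable for both the LCR and the LCM algorithms. -/
theorem global_minima_stable
    {m : ℕ} (lam ηinit f1 f2 : ℝ)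
    (hlam : lam ∈ Set.Ioo (0 : ℝ) 1) (hηinit : 0 < ηinit) (hf1 : 1 < f1) (hf2 : 1 < f2)
    (F : EuclideanSpace ℝ (Fin m) → EuclideanSpace ℝ (Fin m))
    (V : EuclideanSpace ℝ (Fin m) → ℝ)
    (hF : Continuous F) (hV : ContDiff ℝ 2 V) (hV0 : ∀ y, 0 ≤ V y)
    (hVdot : ∀ y, lyapDeriv F V y ≤ 0)
    (hrad : ∀ C : ℝ, ∃ Rr : ℝ, ∀ y : EuclideanSpace ℝ (Fin m), Rr ≤ ‖y‖ → C ≤ V y)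
    (G : Set (EuclideanSpace ℝ (Fin m)))
    (hG : G = {ystar | ∀ y, V ystar ≤ V y}) (hGne : G.Nonempty) :
    ∀ ε > 0, ∃ r > 0, ∀ (y : ℕ → EuclideanSpace ℝ (Fin m)) (η : ℕ → ℝ),
      (IsLCR F V lam ηinit f1 y η ∨ IsLCM F V lam ηinit f1 f2 y η) →
      Metric.infDist (y 0) G < r →
      ∀ n : ℕ, Metric.infDist (y n) G < ε :=
  global_minima_stable_general lam ηinit f1 f2 hlam hηinit hf1 hf2 F V hV hVdot hrad G hG hGne
end
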